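/- Let ε > 0, let B : [0,T] × Ω → ℝ³ and W : [0,T] × Ω → ℝ³ be smooth, let u be a smooth vector field with u₃ = 0 on Σ ⊂ ∂Ω (Ω = 𝕋² × (-1,1), Σ = {x₃ = ±1}), and let D_t = ∂_t + u·∇. Then ∫_Ω ε² (B × D_t(B × W)) · W dx = -(1/2) d/dt ∫_Ω ε² |B × W|² dx + (1/2) ∫_Ω ε² (∇·u) |B × W|² dx. -/

import Mathlib

open MeasureTheory

noncomputable section

/-- Partial derivative `∂ᵢ f` of a scalar function on `ℝ³`. -/
def pd (i : Fin 3) (f : (Fin 3 → ℝ) → ℝ) (x : Fin 3 → ℝ) : ℝ :=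
  fderiv ℝ f x (Pi.single i 1)

/-- Divergence `∇·F` of a vector field on `ℝ³`. -/
def div3 (F : (Fin 3 → ℝ) → (Fin 3 → ℝ)) (x : Fin 3 → ℝ) : ℝ :=
  ∑ i, pd i (fun y => F y i) x

/-- A fundamental domain for `Ω = 𝕋² × (-1,1)`. -/
def Om : Set (Fin 3 → ℝ) :=
  {x | x 0 ∈ Set.Ioo (0:ℝ) 1 ∧ x 1 ∈ Set.Ioo (0:ℝ) 1 ∧ x 2 ∈ Set.Ioo (-1:ℝ) 1}

/-- Material derivative `D_t g = ∂ₜ g + u·∇g` of a time-dependent scalar. -/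
def Dtf (u : ℝ → (Fin 3 → ℝ) → (Fin 3 → ℝ)) (g : ℝ → (Fin 3 → ℝ) → ℝ)
    (t : ℝ) (x : Fin 3 → ℝ) : ℝ :=
  deriv (fun s => g s x) t + ∑ i, u t x i * pd i (g t) x

/-- Material derivative applied componentwise to a time-dependent vector field. -/
def DtV (u F : ℝ → (Fin 3 → ℝ) → (Fin 3 → ℝ)) (t : ℝ) (x : Fin 3 → ℝ) : Fin 3 → ℝ :=
  fun i => Dtf u (fun s y => F s y i) t x

open Function
open scoped Matrix

/-!
Write `Q = B × W`. Antisymmetry of the triple product gives `(B × D_t Q)·W = -Q·D_t Q`, and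
`2 Q·D_t Q = D_t|Q|² = ∂_t|Q|² + u·∇|Q|²` because `D_t` is a derivation. Differentiating under
the integral sign over the closed box `Ω̄`, `d/dt ∫ ε²|Q|² = ∫ ∂_t(ε²|Q|²)`, and the transport
term integrates by parts to `-∫ (∇·u) ε²|Q|²`: the flux of `ε²|Q|² u` through the lateral faces
cancels by periodicity and vanishes on `x₃ = ±1` because `u₃ = 0` there.
-/

theorem cross_dotProduct_swap (b d w : Fin 3 → ℝ) : (b ⨯₃ d) ⬝ᵥ w = -((b ⨯₃ w) ⬝ᵥ d) := by
  rw [dotProduct_comm, triple_product_permutation, ← cross_anticomm, dotProduct_neg,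
    dotProduct_comm _ d, triple_product_permutation d]

theorem ContDiff.crossProduct {E : Type*} [NormedAddCommGroup E] [NormedSpace ℝ E]
    {f g : E → Fin 3 → ℝ} {n : WithTop ℕ∞} (hf : ContDiff ℝ n f) (hg : ContDiff ℝ n g) :
    ContDiff ℝ n fun x => f x ⨯₃ g x := by
  have hf' := contDiff_pi.1 hf
  have hg' := contDiff_pi.1 hg
  refine contDiff_pi.2 fun i => ?_
  fin_cases i <;>
  · simp only [cross_apply]
    exact ((hf' _).mul (hg' _)).sub ((hf' _).mul (hg' _))

section MaterialDerivative

variable {E F : Type*} [NormedAddCommGroup E] [NormedSpace ℝ E]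
  [NormedAddCommGroup F] [NormedSpace ℝ F]

theorem hasDerivAt_of_differentiableAt_uncurry {g : ℝ → E → F} {t : ℝ} {x : E}
    (hg : DifferentiableAt ℝ (uncurry g) (t, x)) :
    HasDerivAt (fun s => g s x) (fderiv ℝ (uncurry g) (t, x) (1, 0)) t :=
  hg.hasFDerivAt.comp_hasDerivAt (f := fun s => (s, x)) t
    ((hasDerivAt_id t).prodMk (hasDerivAt_const t x))

theorem fderiv_eq_fderiv_uncurry {g : ℝ → E → F} {t : ℝ} {x : E}
    (hg : DifferentiableAt ℝ (uncurry g) (t, x)) (v : E) :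
    fderiv ℝ (g t) x v = fderiv ℝ (uncurry g) (t, x) (0, v) := by
  have hslice : HasFDerivAt (fun y : E => (t, y))
      ((0 : E →L[ℝ] ℝ).prod (ContinuousLinearMap.id ℝ E)) x :=
    (hasFDerivAt_const t x).prodMk (hasFDerivAt_id x)
  change fderiv ℝ (uncurry g ∘ fun y => (t, y)) x v = _
  rw [(hg.hasFDerivAt.comp x hslice).fderiv]
  simp

variable {u : ℝ → (Fin 3 → ℝ) → (Fin 3 → ℝ)} {t : ℝ} {x : Fin 3 → ℝ}

theorem Dtf_eq_fderiv_uncurry {g : ℝ → (Fin 3 → ℝ) → ℝ}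
    (hg : DifferentiableAt ℝ (uncurry g) (t, x)) :
    Dtf u g t x = fderiv ℝ (uncurry g) (t, x) (1, u t x) := by
  have hdir : ((1 : ℝ), u t x) = (1, 0) + ∑ i, u t x i • ((0 : ℝ), Pi.single i (1 : ℝ)) := by
    ext j
    · simp [Prod.fst_sum]
    · simp [Prod.snd_sum, Finset.sum_apply, Pi.single_apply]
  simp only [Dtf, pd, (hasDerivAt_of_differentiableAt_uncurry hg).deriv,
    fderiv_eq_fderiv_uncurry hg, hdir, map_add, map_sum, map_smul, smul_eq_mul]

theorem DtV_apply_eq_fderiv_uncurry {Q : ℝ → (Fin 3 → ℝ) → (Fin 3 → ℝ)}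
    (hQ : DifferentiableAt ℝ (uncurry Q) (t, x)) (i : Fin 3) :
    DtV u Q t x i = fderiv ℝ (uncurry Q) (t, x) (1, u t x) i := by
  have hQi : HasFDerivAt (fun q => uncurry Q q i)
      ((ContinuousLinearMap.proj i).comp (fderiv ℝ (uncurry Q) (t, x))) (t, x) :=
    hasFDerivAt_pi'.1 hQ.hasFDerivAt i
  rw [DtV, Dtf_eq_fderiv_uncurry (g := fun s y => Q s y i) hQi.differentiableAt]
  exact congrArg (· (1, u t x)) hQi.fderiv

theorem Dtf_const_mul_sum_sq (c : ℝ) {Q : ℝ → (Fin 3 → ℝ) → (Fin 3 → ℝ)}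
    (hQ : DifferentiableAt ℝ (uncurry Q) (t, x)) :
    Dtf u (fun s y => c * ∑ i, Q s y i ^ 2) t x = 2 * c * (Q t x ⬝ᵥ DtV u Q t x) := by
  set L := fderiv ℝ (uncurry Q) (t, x)
  have hQi : ∀ i, HasFDerivAt (fun q => uncurry Q q i)
      ((ContinuousLinearMap.proj i).comp L) (t, x) :=
    hasFDerivAt_pi'.1 hQ.hasFDerivAt
  have hE : HasFDerivAt (uncurry fun s y => c * ∑ i, Q s y i ^ 2)
      (c • ∑ i, (Q t x i • (ContinuousLinearMap.proj i).comp L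
        + Q t x i • (ContinuousLinearMap.proj i).comp L)) (t, x) := by
    simp only [sq]
    exact (HasFDerivAt.fun_sum fun i _ => (hQi i).mul (hQi i)).const_mul c
  rw [Dtf_eq_fderiv_uncurry hE.differentiableAt, hE.fderiv]
  simp only [smul_apply, sum_apply, add_apply,
    ContinuousLinearMap.comp_apply, ContinuousLinearMap.proj_apply,
    smul_eq_mul, Finset.mul_sum, dotProduct, DtV_apply_eq_fderiv_uncurry hQ, L]
  exact Finset.sum_congr rfl fun i _ => by ring

end MaterialDerivative

theorem Fin.insertNth_add_eq_add_single {n : ℕ} {M : Type*} [AddMonoid M] (i : Fin (n + 1))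
    (a b : M) (y : Fin n → M) :
    i.insertNth (a + b) y = i.insertNth a y + (Pi.single i b : Fin (n + 1) → M) := by
  refine Fin.insertNth_eq_iff.2 ⟨by simp, ?_⟩
  ext j
  simp [Fin.removeNth]

theorem Om_ae_eq_Icc : Om =ᵐ[volume] Set.Icc ![0, 0, -1] 1 := by
  have hOm : Om = Set.univ.pi fun i => Set.Ioo (![0, 0, -1] i) ((1 : Fin 3 → ℝ) i) := by
    ext x
    simp [Om, Fin.forall_fin_succ]
  rw [hOm, volume_pi]
  exact Measure.univ_pi_Ioo_ae_eq_Icc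

theorem pd_apply_eq_fderiv_apply {F : (Fin 3 → ℝ) → (Fin 3 → ℝ)} {x : Fin 3 → ℝ}
    (hF : DifferentiableAt ℝ F x) (i : Fin 3) :
    pd i (fun y => F y i) x = fderiv ℝ F x (Pi.single i 1) i := by
  rw [pd, fderiv_apply hF]
  rfl

theorem integral_div3_eq_zero_of_periodic {F : (Fin 3 → ℝ) → (Fin 3 → ℝ)}
    (hF : ContDiff ℝ 1 F)
    (hper : ∀ (x : Fin 3 → ℝ) (i : Fin 2), F (x + Pi.single i.castSucc 1) = F x)
    (hwall : ∀ x : Fin 3 → ℝ, x 2 = 1 ∨ x 2 = -1 → F x 2 = 0) :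
    ∫ x in Set.Icc ![0, 0, -1] 1, div3 F x = 0 := by
  have hdiff : Differentiable ℝ F := hF.differentiable one_ne_zero
  have hdiv : div3 F = fun x => ∑ i, fderiv ℝ F x (Pi.single i 1) i := by
    ext x
    exact Finset.sum_congr rfl fun i _ => pd_apply_eq_fderiv_apply (hdiff x) i
  have hint : IntegrableOn (fun x => ∑ i, fderiv ℝ F x (Pi.single i 1) i)
      (Set.Icc ![0, 0, -1] 1) :=
    (continuous_finsetSum _ fun i _ => (continuous_apply i).comp
      ((hF.continuous_fderiv one_ne_zero).clm_apply continuous_const)).integrableOn_Icc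
  have hle : (![0, 0, -1] : Fin 3 → ℝ) ≤ 1 := fun i => by fin_cases i <;> norm_num
  rw [hdiv, integral_divergence_of_hasFDerivAt_off_countable _ _ hle F (fderiv ℝ F) ∅
    Set.countable_empty hF.continuous.continuousOn (fun x _ => (hdiff x).hasFDerivAt) hint]
  have hface : ∀ (i : Fin 2) (y : Fin 2 → ℝ),
      F (i.castSucc.insertNth 1 y) = F (i.castSucc.insertNth 0 y) := by
    intro i y
    rw [← hper (i.castSucc.insertNth 0 y) i, ← Fin.insertNth_add_eq_add_single, zero_add]
  have hflux : ∀ (i : Fin 3) (y : Fin 2 → ℝ),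
      F (i.insertNth ((1 : Fin 3 → ℝ) i) y) i = F (i.insertNth (![0, 0, -1] i) y) i := by
    intro i y
    match i with
    | 0 => exact congrFun (hface 0 y) 0
    | 1 => exact congrFun (hface 1 y) 1
    | 2 => exact (hwall _ (Or.inl (by simp))).trans (hwall _ (Or.inr (by simp))).symm
  simp only [hflux, sub_self, Finset.sum_const_zero]

theorem ContDiff.continuous_pd {ψ : (Fin 3 → ℝ) → ℝ} (hψ : ContDiff ℝ 1 ψ) (i : Fin 3) :
    Continuous (pd i ψ) :=
  (hψ.continuous_fderiv one_ne_zero).clm_apply continuous_const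

theorem ContDiff.continuous_div3 {v : (Fin 3 → ℝ) → (Fin 3 → ℝ)} (hv : ContDiff ℝ 1 v) :
    Continuous (div3 v) :=
  continuous_finsetSum _ fun i _ => (contDiff_pi.1 hv i).continuous_pd i

theorem continuous_sum_mul_pd {v : (Fin 3 → ℝ) → (Fin 3 → ℝ)} {φ : (Fin 3 → ℝ) → ℝ}
    (hv : Continuous v) (hφ : ContDiff ℝ 1 φ) : Continuous fun x => ∑ i, v x i * pd i φ x :=
  continuous_finsetSum _ fun i _ => ((continuous_apply i).comp hv).mul (hφ.continuous_pd i)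

theorem div3_smul {φ : (Fin 3 → ℝ) → ℝ} {v : (Fin 3 → ℝ) → (Fin 3 → ℝ)} {x : Fin 3 → ℝ}
    (hφ : DifferentiableAt ℝ φ x) (hv : DifferentiableAt ℝ v x) :
    div3 (fun y => φ y • v y) x = div3 v x * φ x + ∑ i, v x i * pd i φ x := by
  have hprod : ∀ i, pd i (fun y => φ y * v y i) x
      = φ x * pd i (fun y => v y i) x + v x i * pd i φ x := fun i => by
    rw [pd, fderiv_fun_mul hφ (differentiableAt_pi.1 hv i)]
    simp [pd]
  simp only [div3, Pi.smul_apply, smul_eq_mul, hprod, Finset.sum_add_distrib, Finset.sum_mul]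
  simp only [mul_comm (φ x)]

theorem integral_dot_pd_eq_neg_integral_div3_mul {v : (Fin 3 → ℝ) → (Fin 3 → ℝ)}
    {φ : (Fin 3 → ℝ) → ℝ} (hv : ContDiff ℝ 1 v) (hφ : ContDiff ℝ 1 φ)
    (hvper : ∀ (x : Fin 3 → ℝ) (i : Fin 2), v (x + Pi.single i.castSucc 1) = v x)
    (hφper : ∀ (x : Fin 3 → ℝ) (i : Fin 2), φ (x + Pi.single i.castSucc 1) = φ x)
    (hwall : ∀ x : Fin 3 → ℝ, x 2 = 1 ∨ x 2 = -1 → v x 2 = 0) :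
    ∫ x in Set.Icc ![0, 0, -1] 1, ∑ i, v x i * pd i φ x
      = -∫ x in Set.Icc ![0, 0, -1] 1, div3 v x * φ x := by
  have hflux := integral_div3_eq_zero_of_periodic (F := fun y => φ y • v y) (hφ.smul hv)
    (fun x i => by simp only [hvper, hφper]) (fun x hx => by simp [hwall x hx])
  have hdiv_smul (x) :=
    div3_smul (hφ.differentiable one_ne_zero x) (hv.differentiable one_ne_zero x)
  have hint_div : IntegrableOn (fun x => div3 v x * φ x) (Set.Icc ![0, 0, -1] 1) :=
    (hv.continuous_div3.mul hφ.continuous).integrableOn_Icc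
  have hint_grad : IntegrableOn (fun x => ∑ i, v x i * pd i φ x) (Set.Icc ![0, 0, -1] 1) :=
    (continuous_sum_mul_pd hv.continuous hφ).integrableOn_Icc
  rw [integral_congr_ae (.of_forall hdiv_smul), integral_add hint_div hint_grad] at hflux
  linarith

section DifferentiationUnderIntegral

variable {E : Type*} [NormedAddCommGroup E] [NormedSpace ℝ E]

theorem continuous_deriv_of_contDiff_uncurry {f : ℝ → E → ℝ} (hf : ContDiff ℝ 1 (uncurry f)) :
    Continuous fun q : ℝ × E => deriv (fun s => f s q.2) q.1 := by
  have hderiv : (fun q : ℝ × E => deriv (fun s => f s q.2) q.1)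
      = fun q => fderiv ℝ (uncurry f) q (1, 0) := by
    ext ⟨s, x⟩
    exact (hasDerivAt_of_differentiableAt_uncurry (hf.differentiable one_ne_zero _)).deriv
  rw [hderiv]
  exact (hf.continuous_fderiv one_ne_zero).clm_apply continuous_const

variable [MeasurableSpace E] [OpensMeasurableSpace E] {μ : Measure E}
  [IsFiniteMeasureOnCompacts μ]

theorem hasDerivAt_setIntegral_of_contDiff_uncurry {K : Set E} (hK : IsCompact K)
    {f : ℝ → E → ℝ} (hf : ContDiff ℝ 1 (uncurry f)) (t : ℝ) :
    HasDerivAt (fun s => ∫ x in K, f s x ∂μ) (∫ x in K, deriv (fun s => f s x) t ∂μ) t := by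
  have hcont : ∀ s, Continuous (f s) := fun s =>
    hf.continuous.comp (continuous_const.prodMk continuous_id)
  have hderiv := continuous_deriv_of_contDiff_uncurry hf
  obtain ⟨C, hC⟩ :=
    ((isCompact_Icc (a := t - 1) (b := t + 1)).prod hK).exists_bound_of_continuousOn
      hderiv.continuousOn
  have hbound : ∀ᵐ x ∂μ.restrict K, ∀ s ∈ Metric.ball t 1,
      ‖deriv (fun s => f s x) s‖ ≤ C := by
    filter_upwards [ae_restrict_mem hK.measurableSet] with x hx s hs
    rw [Metric.mem_ball, Real.dist_eq, abs_lt] at hs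
    exact hC (s, x) ⟨⟨by linarith, by linarith⟩, hx⟩
  exact (hasDerivAt_integral_of_dominated_loc_of_deriv_le (Metric.ball_mem_nhds t one_pos)
    (.of_forall fun s => (hcont s).aestronglyMeasurable)
    ((hcont t).continuousOn.integrableOn_compact hK)
    (hderiv.comp (continuous_const.prodMk continuous_id)).aestronglyMeasurable
    hbound (integrableOn_const hK.measure_lt_top.ne)
    (.of_forall fun x s _ => (hasDerivAt_of_differentiableAt_uncurry
      (hf.differentiable one_ne_zero _)).differentiableAt.hasDerivAt)).2

end DifferentiationUnderIntegral

theorem lorentz_hidden_energy_structure_general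
    (ε : ℝ)
    (B W u : ℝ → (Fin 3 → ℝ) → (Fin 3 → ℝ))
    (hB : ContDiff ℝ (⊤ : ℕ∞) (fun q : ℝ × (Fin 3 → ℝ) => B q.1 q.2))
    (hW : ContDiff ℝ (⊤ : ℕ∞) (fun q : ℝ × (Fin 3 → ℝ) => W q.1 q.2))
    (hu : ContDiff ℝ (⊤ : ℕ∞) (fun q : ℝ × (Fin 3 → ℝ) => u q.1 q.2))
    (hBper : ∀ (t : ℝ) (x : Fin 3 → ℝ) (i : Fin 2),
      B t (x + Pi.single i.castSucc 1) = B t x)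
    (hWper : ∀ (t : ℝ) (x : Fin 3 → ℝ) (i : Fin 2),
      W t (x + Pi.single i.castSucc 1) = W t x)
    (huper : ∀ (t : ℝ) (x : Fin 3 → ℝ) (i : Fin 2),
      u t (x + Pi.single i.castSucc 1) = u t x)
    (hbc : ∀ (t : ℝ) (x : Fin 3 → ℝ), x 2 = 1 ∨ x 2 = -1 → u t x 2 = 0) :
    ∀ t : ℝ,
      HasDerivAt
        (fun s => ∫ x in Om, ε^2 * ∑ i, (crossProduct (B s x) (W s x) i)^2)
        ((∫ x in Om, ε^2 * div3 (u t) x * ∑ i, (crossProduct (B t x) (W t x) i)^2)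
          - 2 * ∫ x in Om, ε^2 * dotProduct
              (crossProduct (B t x)
                (DtV u (fun s y => crossProduct (B s y) (W s y)) t x)) (W t x)) t := by
  intro t
  simp_rw [setIntegral_congr_set Om_ae_eq_Icc]
  have hsmooth : (1 : WithTop ℕ∞) ≤ (⊤ : ℕ∞) := by exact_mod_cast le_top
  have hQ : ContDiff ℝ 1 (uncurry fun s y => B s y ⨯₃ W s y) :=
    (hB.crossProduct hW).of_le hsmooth
  have he : ContDiff ℝ 1 (uncurry fun s y => ε ^ 2 * ∑ i, (B s y ⨯₃ W s y) i ^ 2) :=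
    contDiff_const.mul (ContDiff.sum fun i _ => ((contDiff_pi.1 hQ i).pow 2))
  have hslice {g : ℝ → (Fin 3 → ℝ) → ℝ} (hg : ContDiff ℝ 1 (uncurry g)) : ContDiff ℝ 1 (g t) :=
    hg.comp (contDiff_prodMk_right t)
  have hmaterial : ∀ x, deriv (fun s => ε ^ 2 * ∑ i, (B s x ⨯₃ W s x) i ^ 2) t
      + ∑ i, u t x i * pd i (fun y => ε ^ 2 * ∑ i, (B t y ⨯₃ W t y) i ^ 2) x
      = -2 * (ε ^ 2 * (B t x ⨯₃ DtV u (fun s y => B s y ⨯₃ W s y) t x) ⬝ᵥ W t x) := by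
    intro x
    change Dtf u (fun s y => ε ^ 2 * ∑ i, (B s y ⨯₃ W s y) i ^ 2) t x = _
    rw [Dtf_const_mul_sum_sq _ (hQ.differentiable one_ne_zero _), cross_dotProduct_swap]
    ring
  have hibp := integral_dot_pd_eq_neg_integral_div3_mul (v := u t)
    ((hu.of_le hsmooth).comp (contDiff_prodMk_right t))
    (hslice he) (huper t) (fun x i => by simp only [hBper, hWper]) (hbc t)
  have hint_deriv : IntegrableOn (fun x => deriv (fun s => ε ^ 2 * ∑ i, (B s x ⨯₃ W s x) i ^ 2) t)
      (Set.Icc ![0, 0, -1] 1) :=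
    ((continuous_deriv_of_contDiff_uncurry he).comp
      (continuous_const.prodMk continuous_id)).integrableOn_Icc
  have hint_grad : IntegrableOn
      (fun x => ∑ i, u t x i * pd i (fun y => ε ^ 2 * ∑ i, (B t y ⨯₃ W t y) i ^ 2) x)
      (Set.Icc ![0, 0, -1] 1) :=
    (continuous_sum_mul_pd (hu.continuous.comp (continuous_const.prodMk continuous_id))
      (hslice he)).integrableOn_Icc
  convert hasDerivAt_setIntegral_of_contDiff_uncurry (μ := volume) isCompact_Icc he t using 1
  calc _ = -2 * (∫ x in Set.Icc ![0, 0, -1] 1,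
          ε ^ 2 * (B t x ⨯₃ DtV u (fun s y => B s y ⨯₃ W s y) t x) ⬝ᵥ W t x)
        - -∫ x in Set.Icc ![0, 0, -1] 1, div3 (u t) x * (ε ^ 2 * ∑ i, (B t x ⨯₃ W t x) i ^ 2) := by
        simp only [mul_left_comm (div3 (u t) _), mul_assoc]
        ring
    _ = _ := by
      rw [← hibp, ← integral_const_mul, ← integral_congr_ae (.of_forall hmaterial),
        integral_add hint_deriv hint_grad]
      ring

/-- The hidden structure of the Lorentz force: for smooth `B, W` and a smooth
velocity `u` with `u₃ = 0` on `Σ = {x₃ = ±1}` (and `Ω = 𝕋² × (-1,1)`),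
`∫_Ω ε² (B × D_t(B × W))·W dx
  = -(1/2) d/dt ∫_Ω ε² |B × W|² dx + (1/2) ∫_Ω ε² (∇·u)|B × W|² dx`. -/
theorem lorentz_hidden_energy_structure
    (ε : ℝ) (hε : 0 < ε)
    (B W u : ℝ → (Fin 3 → ℝ) → (Fin 3 → ℝ))
    (hB : ContDiff ℝ (⊤ : ℕ∞) (fun q : ℝ × (Fin 3 → ℝ) => B q.1 q.2))
    (hW : ContDiff ℝ (⊤ : ℕ∞) (fun q : ℝ × (Fin 3 → ℝ) => W q.1 q.2))
    (hu : ContDiff ℝ (⊤ : ℕ∞) (fun q : ℝ × (Fin 3 → ℝ) => u q.1 q.2))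
    (hBper : ∀ (t : ℝ) (x : Fin 3 → ℝ) (i : Fin 2),
      B t (x + Pi.single i.castSucc 1) = B t x)
    (hWper : ∀ (t : ℝ) (x : Fin 3 → ℝ) (i : Fin 2),
      W t (x + Pi.single i.castSucc 1) = W t x)
    (huper : ∀ (t : ℝ) (x : Fin 3 → ℝ) (i : Fin 2),
      u t (x + Pi.single i.castSucc 1) = u t x)
    (hbc : ∀ (t : ℝ) (x : Fin 3 → ℝ), x 2 = 1 ∨ x 2 = -1 → u t x 2 = 0) :
    ∀ t : ℝ,
      HasDerivAt
        (fun s => ∫ x in Om, ε^2 * ∑ i, (crossProduct (B s x) (W s x) i)^2)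
        ((∫ x in Om, ε^2 * div3 (u t) x * ∑ i, (crossProduct (B t x) (W t x) i)^2)
          - 2 * ∫ x in Om, ε^2 * dotProduct
              (crossProduct (B t x)
                (DtV u (fun s y => crossProduct (B s y) (W s y)) t x)) (W t x)) t :=
  lorentz_hidden_energy_structure_general ε B W u hB hW hu hBper hWper huper hbc

end
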